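/- There exists a group homomorphism ψ : Br₆ → G(Γ) with ψ(t_i) = σ_{v_{i+2}} for 1 ≤ i ≤ 5, and the image of ψ lies in the centralizer of σ_{v₁}; in particular σ_{v_j} σ_{v₁} = σ_{v₁} σ_{v_j} holds in G(Γ) for every 3 ≤ j ≤ 7. -/

import Mathlib

/-!
The five vertices `v₃, …, v₇` form a path in `Γ`: consecutive ones are adjacent and the others
are not, so their generators satisfy the braid relations of `Br₆` and `t_i ↦ σ_{v_{i+2}}` is a
homomorphism. None of them is adjacent to `v₁`, so each generator of the image commutes with
`σ_{v₁}`, hence so does the whole image.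
-/

/-- Vertices of the Lönne graph: quadruples in `{0,1}^4`. -/
abbrev Vtx : Type := Fin 4 → Fin 2

/-- Two distinct vertices `i, j` are joined by an edge iff
`(i_μ − j_μ)·(i_ν − j_ν) ≥ 0` for all `μ, ν` (differences taken in `ℤ`). -/
def LonneEdge (i j : Vtx) : Prop :=
  i ≠ j ∧ ∀ μ ν : Fin 4,
    0 ≤ (((i μ : ℕ) : ℤ) - ((j μ : ℕ) : ℤ)) * (((i ν : ℕ) : ℤ) - ((j ν : ℕ) : ℤ))

/-- The defining relations of the Artin group `G(Γ)`: commutation for non-edges,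
braiding for edges. -/
def artinRels : Set (FreeGroup Vtx) :=
  {r | ∃ v w : Vtx,
    (v ≠ w ∧ ¬ LonneEdge v w ∧
      r = FreeGroup.of v * FreeGroup.of w * (FreeGroup.of v)⁻¹ * (FreeGroup.of w)⁻¹) ∨
    (LonneEdge v w ∧
      r = FreeGroup.of v * FreeGroup.of w * FreeGroup.of v *
        (FreeGroup.of w * FreeGroup.of v * FreeGroup.of w)⁻¹)}

/-- The Artin group `G(Γ)` of the Lönne graph. -/
abbrev ArtinG : Type := PresentedGroup artinRels

/-- The standard generators `σ_v` of `G(Γ)`. -/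
def σ (v : Vtx) : ArtinG := PresentedGroup.of v

/-- The braid relations on `n` generators `t₁, …, t_n` (zero-indexed by `Fin n`):
`Br_{n+1}` is the presented group on these generators. -/
def braidRels (n : ℕ) : Set (FreeGroup (Fin n)) :=
  {r | ∃ i j : Fin n,
    ((j : ℕ) = (i : ℕ) + 1 ∧
      r = FreeGroup.of i * FreeGroup.of j * FreeGroup.of i *
        (FreeGroup.of j * FreeGroup.of i * FreeGroup.of j)⁻¹) ∨
    ((i : ℕ) + 2 ≤ (j : ℕ) ∧
      r = FreeGroup.of i * FreeGroup.of j * (FreeGroup.of i)⁻¹ * (FreeGroup.of j)⁻¹)}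

/-- The braid group `Br₆` on `6` strings, with `5` standard generators. -/
abbrev Br6 : Type := PresentedGroup (braidRels 5)

/-- The sequence of vertices `v₁, …, v₇` (zero-indexed: `chainVtx k` is `v_{k+1}`). -/
def chainVtx : Fin 7 → Vtx :=
  ![![0,0,0,1], ![0,1,0,1], ![0,1,0,0], ![0,1,1,0], ![0,0,1,0], ![1,0,1,0], ![1,0,0,0]]

/-- The subchain `v₃, v₄, v₅, v₆, v₇` (zero-indexed: `subChain k` is `v_{k+3}`). -/
def subChain : Fin 5 → Vtx := fun i => chainVtx ⟨(i : ℕ) + 2, by omega⟩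

namespace PresentedGroup

variable {α G : Type*} [Group G] {rels : Set (FreeGroup α)}

theorem commute_of_forall_commute_of (f : PresentedGroup rels →* G) {a : G}
    (h : ∀ i, Commute (f (of i)) a) (x : PresentedGroup rels) : Commute (f x) a := by
  refine Subgroup.mem_centralizer_singleton_iff.mp ?_
  refine generated_by rels ((Subgroup.centralizer {a}).comap f) (fun i => ?_) x
  exact Subgroup.mem_centralizer_singleton_iff.mpr (h i)

end PresentedGroup

theorem braidRels_lift_eq_one {n : ℕ} {G : Type*} [Group G] {g : Fin n → G}
    (hbraid : ∀ i j : Fin n, (j : ℕ) = i + 1 → g i * g j * g i = g j * g i * g j)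
    (hcomm : ∀ i j : Fin n, (i : ℕ) + 2 ≤ j → Commute (g i) (g j)) :
    ∀ r ∈ braidRels n, FreeGroup.lift g r = 1 := by
  rintro r ⟨i, j, ⟨hij, rfl⟩ | ⟨hij, rfl⟩⟩
  · simpa only [map_mul, map_inv, FreeGroup.lift_apply_of, mul_inv_eq_one] using hbraid i j hij
  · simp only [map_mul, map_inv, FreeGroup.lift_apply_of, (hcomm i j hij).eq]
    group

instance : DecidableRel LonneEdge := fun i j => by
  unfold LonneEdge; infer_instance

theorem commute_σ_of_not_lonneEdge {v w : Vtx} (hne : v ≠ w) (h : ¬ LonneEdge v w) :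
    Commute (σ v) (σ w) := by
  refine PresentedGroup.mk_eq_mk_of_mul_inv_mem
    (x := FreeGroup.of v * FreeGroup.of w) (y := FreeGroup.of w * FreeGroup.of v) ?_
  refine ⟨v, w, Or.inl ⟨hne, h, ?_⟩⟩
  group

theorem σ_braid_of_lonneEdge {v w : Vtx} (h : LonneEdge v w) :
    σ v * σ w * σ v = σ w * σ v * σ w :=
  PresentedGroup.mk_eq_mk_of_mul_inv_mem
    (x := FreeGroup.of v * FreeGroup.of w * FreeGroup.of v) ⟨v, w, Or.inr ⟨h, rfl⟩⟩

theorem lonneEdge_subChain_of_succ :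
    ∀ i j : Fin 5, (j : ℕ) = i + 1 → LonneEdge (subChain i) (subChain j) := by
  decide

theorem not_lonneEdge_subChain_of_add_two_le : ∀ i j : Fin 5, (i : ℕ) + 2 ≤ j →
    subChain i ≠ subChain j ∧ ¬ LonneEdge (subChain i) (subChain j) := by
  decide

theorem not_lonneEdge_subChain_chainVtx_zero :
    ∀ i : Fin 5, subChain i ≠ chainVtx 0 ∧ ¬ LonneEdge (subChain i) (chainVtx 0) := by
  decide

/-- There is a homomorphism `ψ : Br₆ → G(Γ)` with `ψ(t_i) = σ_{v_{i+2}}`, whose image lies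
in the centralizer of `σ_{v₁}`; in particular each `σ_{v_j}`, `3 ≤ j ≤ 7`, commutes with
`σ_{v₁}` in `G(Γ)`. -/
theorem exists_hom_Br6_to_centralizer :
    (∃ ψ : Br6 →* ArtinG,
      (∀ i : Fin 5, ψ (PresentedGroup.of i) = σ (subChain i)) ∧
      (∀ x : Br6, Commute (ψ x) (σ (chainVtx 0)))) ∧
    (∀ i : Fin 5, σ (subChain i) * σ (chainVtx 0) = σ (chainVtx 0) * σ (subChain i)) := by
  have hcomm_v₁ (i : Fin 5) : Commute (σ (subChain i)) (σ (chainVtx 0)) :=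
    commute_σ_of_not_lonneEdge (not_lonneEdge_subChain_chainVtx_zero i).1
      (not_lonneEdge_subChain_chainVtx_zero i).2
  have hcomm_far (i j : Fin 5) (hij : (i : ℕ) + 2 ≤ j) :
      Commute (σ (subChain i)) (σ (subChain j)) :=
    commute_σ_of_not_lonneEdge (not_lonneEdge_subChain_of_add_two_le i j hij).1
      (not_lonneEdge_subChain_of_add_two_le i j hij).2
  have hrels := braidRels_lift_eq_one (g := fun i => σ (subChain i))
    (fun i j hij => σ_braid_of_lonneEdge (lonneEdge_subChain_of_succ i j hij)) hcomm_far
  let ψ : Br6 →* ArtinG := PresentedGroup.toGroup hrels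
  have hψ (i : Fin 5) : ψ (PresentedGroup.of i) = σ (subChain i) := PresentedGroup.toGroup.of hrels
  refine ⟨⟨ψ, hψ, PresentedGroup.commute_of_forall_commute_of ψ fun i => ?_⟩,
    fun i => (hcomm_v₁ i).eq⟩
  rw [hψ]
  exact hcomm_v₁ i
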